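/- For every n ≥ 2 and h ≥ 0, the set of bargraphs of semiperimeter n whose leftmost horizontal segment has width greater than h is in bijection with the set of bargraphs of semiperimeter n−h; explicitly, a bijection is given by deleting h of the H steps from the leftmost horizontal segment. -/

import Mathlib

/-- Steps of bargraphs / Motzkin paths. -/
inductive Step where
  | U : Step
  | H : Step
  | D : Step
deriving DecidableEq

/-- Vertical displacement of a step. -/
def Step.val : Step → ℤ
  | .U => 1
  | .H => 0
  | .D => -1

/-- Mirror of a step (swap U and D). -/
def Step.mirror : Step → Step
  | .U => .D
  | .H => .H
  | .D => .U

/-- Final height of a word. -/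
def hgt (w : List Step) : ℤ := (w.map Step.val).sum

/-- A Motzkin path prefix: never goes below the x-axis. -/
def IsMotzkinPrefix (w : List Step) : Prop := ∀ p : List Step, p <+: w → 0 ≤ hgt p

/-- A Motzkin path: never below the x-axis, ends at height 0. -/
def IsMotzkin (w : List Step) : Prop := IsMotzkinPrefix w ∧ hgt w = 0

/-- No peak `UD` and no valley `DU`. -/
def Cornerless (w : List Step) : Prop :=
  ¬ [Step.U, Step.D] <:+: w ∧ ¬ [Step.D, Step.U] <:+: w

/-- A bargraph: starts at the origin, ends on the x-axis, stays strictly above the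
x-axis except at the endpoints, and has no factor `UD` or `DU`. -/
def IsBargraph (w : List Step) : Prop :=
  2 ≤ w.length ∧ hgt w = 0 ∧
    (∀ p : List Step, p <+: w → p ≠ [] → p ≠ w → 0 < hgt p) ∧ Cornerless w

/-- Semiperimeter: number of `U` steps plus number of `H` steps. -/
def semi (w : List Step) : ℕ := w.count Step.U + w.count Step.H

/-- Length of the initial run of `U` steps. -/
def leadU : List Step → ℕ
  | Step.U :: rest => leadU rest + 1
  | _ => 0

/-- Length of the initial run of `H` steps. -/
def leadH : List Step → ℕ
  | Step.H :: rest => leadH rest + 1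
  | _ => 0

/-- Length of the initial run of `D` steps. -/
def leadD : List Step → ℕ
  | Step.D :: rest => leadD rest + 1
  | _ => 0

/-- Length of the first maximal run of `D` steps (0 if none). -/
def firstDescLen : List Step → ℕ
  | [] => 0
  | Step.D :: rest => leadD rest + 1
  | _ :: rest => firstDescLen rest

/-- Number of occurrences of the two-letter factor `a b`. -/
def cnt2 (a b : Step) : List Step → ℕ
  | x :: y :: rest => (if x = a ∧ y = b then 1 else 0) + cnt2 a b (y :: rest)
  | _ => 0

/-- Heights of the columns (`H` steps), starting from a given height. -/
def colHeights : ℤ → List Step → List ℤ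
  | _, [] => []
  | h, Step.U :: rest => colHeights (h + 1) rest
  | h, Step.H :: rest => h :: colHeights h rest
  | h, Step.D :: rest => colHeights (h - 1) rest

/-- Width of the leftmost maximal horizontal segment (0 if none). -/
def lhsW : List Step → ℕ
  | [] => 0
  | Step.H :: rest => leadH rest + 1
  | _ :: rest => lhsW rest

/-- Delete `h` steps at the start of the leftmost horizontal segment. -/
def stripLeadH (h : ℕ) : List Step → List Step
  | [] => []
  | Step.H :: rest => List.drop h (Step.H :: rest)
  | s :: rest => s :: stripLeadH h rest

/-- Number of initial columns of height 1: largest `j` such that the word begins `U H^j`. -/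
def iuc : List Step → ℕ
  | Step.U :: rest => leadH rest
  | _ => 0

/-- Number of maximal horizontal segments. -/
def hsCount : List Step → ℕ
  | [] => 0
  | [Step.H] => 1
  | [_] => 0
  | a :: b :: rest => (if a = Step.H ∧ b ≠ Step.H then 1 else 0) + hsCount (b :: rest)

/-- Mirror image: reverse the word and swap `U` with `D`. -/
def mir (w : List Step) : List Step := (w.reverse).map Step.mirror

/-- Shape of strictly alternating bargraphs:
`U^{i₁} H D^{k₁} H U^{i₂} H D^{k₂} H ⋯ U^{iₘ} H D^{kₘ}` with all `iᵣ, kᵣ ≥ 1`. -/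
inductive SAShape : List Step → Prop where
  | base (i k : ℕ) : 1 ≤ i → 1 ≤ k →
      SAShape (List.replicate i Step.U ++ [Step.H] ++ List.replicate k Step.D)
  | cons (i k : ℕ) (w : List Step) : 1 ≤ i → 1 ≤ k → SAShape w →
      SAShape (List.replicate i Step.U ++ [Step.H] ++ List.replicate k Step.D ++ [Step.H] ++ w)

/-- A strictly alternating bargraph. -/
def IsStrictAlt (w : List Step) : Prop := IsBargraph w ∧ SAShape w

/-- A secondary structure on `{0, …, m-1}`: all consecutive edges are present, every
vertex has at most one non-consecutive neighbour, and there are no crossing edges. -/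
def IsSecondaryStructure {m : ℕ} (G : SimpleGraph (Fin m)) : Prop :=
  (∀ i j : Fin m, (i : ℕ) + 1 = (j : ℕ) → G.Adj i j) ∧
  (∀ i j k : Fin m, G.Adj i j → G.Adj i k →
      (i : ℕ) + 1 ≠ (j : ℕ) → (j : ℕ) + 1 ≠ (i : ℕ) →
      (i : ℕ) + 1 ≠ (k : ℕ) → (k : ℕ) + 1 ≠ (i : ℕ) → j = k) ∧
  ¬ ∃ i j k l : Fin m, (i : ℕ) < (j : ℕ) ∧ (j : ℕ) < (k : ℕ) ∧ (k : ℕ) < (l : ℕ) ∧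
      G.Adj i k ∧ G.Adj j l

/-- Generating function of bargraphs: `x` (variable 0) marks `H` steps,
`y` (variable 1) marks `U` steps. -/
noncomputable def BG : MvPowerSeries (Fin 2) ℚ :=
  fun d => (Nat.card {w : List Step //
    IsBargraph w ∧ w.count Step.H = d 0 ∧ w.count Step.U = d 1} : ℚ)

/-- Generating function of cornerless Motzkin paths. -/
noncomputable def MG : MvPowerSeries (Fin 2) ℚ :=
  fun d => (Nat.card {w : List Step //
    IsMotzkin w ∧ Cornerless w ∧ w.count Step.H = d 0 ∧ w.count Step.U = d 1} : ℚ)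

/-- Generating function of bargraphs avoiding the factor `DH`. -/
noncomputable def BDH : MvPowerSeries (Fin 2) ℚ :=
  fun d => (Nat.card {w : List Step //
    IsBargraph w ∧ ¬ [Step.D, Step.H] <:+: w ∧
      w.count Step.H = d 0 ∧ w.count Step.U = d 1} : ℚ)

/-- Generating function of bargraphs avoiding the factors `DH` and `HH`. -/
noncomputable def BDHHH : MvPowerSeries (Fin 2) ℚ :=
  fun d => (Nat.card {w : List Step //
    IsBargraph w ∧ ¬ [Step.D, Step.H] <:+: w ∧ ¬ [Step.H, Step.H] <:+: w ∧
      w.count Step.H = d 0 ∧ w.count Step.U = d 1} : ℚ)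

/-- Generating function of cornerless Motzkin path prefixes ending at height `h`. -/
noncomputable def Pgf (h : ℕ) : MvPowerSeries (Fin 2) ℚ :=
  fun d => (Nat.card {w : List Step //
    IsMotzkinPrefix w ∧ Cornerless w ∧ hgt w = (h : ℤ) ∧
      w.count Step.H = d 0 ∧ w.count Step.U = d 1} : ℚ)

/-- Decomposition `G = U^a G₁ H G₂ D^a` of a strictly alternating bargraph. -/
def SADecomp (t : ℕ × List Step × List Step) (G : List Step) : Prop :=
  1 ≤ t.1 ∧ IsStrictAlt t.2.1 ∧ IsStrictAlt (Step.U :: (t.2.2 ++ [Step.D])) ∧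
    G = List.replicate t.1 Step.U ++ t.2.1 ++ [Step.H] ++ t.2.2 ++
      List.replicate t.1 Step.D


/-!
A bargraph starts `U^a H^b r` with `a, b ≥ 1` and `r` not starting with `H`, and whether
`U^a H^b r` is a bargraph does not depend on `b ≥ 1`: doubling an `H` step that is not the
first step of the word changes neither the final height, nor the heights reached by proper
prefixes, nor the factors `UD` and `DU`. Hence deleting `h < b` of these `H` steps and
inserting `h` of them back are mutually inverse, and they shift the semiperimeter by `h`.
-/

open List

namespace List

variable {α : Type*}

theorem exists_eq_replicate_append (x : α) : ∀ l : List α,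
    ∃ n t, l = replicate n x ++ t ∧ t.head? ≠ some x
  | [] => ⟨0, [], rfl, by simp⟩
  | y :: l => by
    by_cases hy : y = x
    · obtain ⟨n, t, rfl, ht⟩ := exists_eq_replicate_append x l
      exact ⟨n + 1, t, by simp [hy, replicate_succ], ht⟩
    · exact ⟨0, y :: l, rfl, by simpa using hy⟩

theorem prefix_append_cons_cases {s p q : List α} {a : α} (h : s <+: p ++ a :: q) :
    s <+: p ∨ ∃ t, t <+: q ∧ s = p ++ a :: t := by
  rcases le_total s.length p.length with hl | hl
  · exact .inl (prefix_of_prefix_length_le h (prefix_append p _) hl)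
  · obtain ⟨r, rfl⟩ := prefix_of_prefix_length_le (prefix_append p _) h hl
    rcases prefix_cons_iff.1 ((prefix_append_right_inj p).1 h) with rfl | ⟨t, rfl, ht⟩
    · exact .inl (by simp)
    · exact .inr ⟨t, ht, rfl⟩

theorem not_pair_infix_iff_isChain {a b : α} :
    ∀ {l : List α}, ¬ [a, b] <:+: l ↔ l.IsChain (fun x y => ¬ (x = a ∧ y = b))
  | [] => by simp
  | [x] => by simp [infix_cons_iff]
  | x :: y :: t => by
    rw [infix_cons_iff, cons_prefix_cons, cons_prefix_cons, isChain_cons_cons,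
      ← not_pair_infix_iff_isChain]
    simp [eq_comm]

theorem isChain_append_cons_cons_self_iff {R : α → α → Prop} {a : α} (ha : R a a)
    {l₁ l₂ : List α} : IsChain R (l₁ ++ a :: a :: l₂) ↔ IsChain R (l₁ ++ a :: l₂) := by
  rw [isChain_append_cons_cons, isChain_split (l₂ := l₂)]
  simp [ha]

end List

def ProperPrefixesPos (w : List Step) : Prop :=
  ∀ p : List Step, p <+: w → p ≠ [] → p ≠ w → 0 < hgt p

theorem isBargraph_iff {w : List Step} :
    IsBargraph w ↔ 2 ≤ w.length ∧ hgt w = 0 ∧ ProperPrefixesPos w ∧ Cornerless w :=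
  Iff.rfl

theorem hgt_append_H_cons (p q : List Step) :
    hgt (p ++ Step.H :: q) = hgt (p ++ q) := by
  simp [hgt, Step.val]

section DuplicateH

variable {p q : List Step}

theorem cornerless_append_H_H_cons_iff :
    Cornerless (p ++ Step.H :: Step.H :: q) ↔ Cornerless (p ++ Step.H :: q) := by
  simp only [Cornerless, not_pair_infix_iff_isChain]
  rw [isChain_append_cons_cons_self_iff (by simp), isChain_append_cons_cons_self_iff (by simp)]

theorem properPrefixesPos_append_H_H_cons_iff (hp : p ≠ []) :
    ProperPrefixesPos (p ++ Step.H :: Step.H :: q) ↔ ProperPrefixesPos (p ++ Step.H :: q) := by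
  constructor
  · intro h s hs hne hproper
    rcases prefix_append_cons_cases hs with hsp | ⟨t, ht, rfl⟩
    · refine h s (hsp.trans (prefix_append _ _)) hne ?_
      rintro rfl
      simpa using hsp.length_le
    · rw [← hgt_append_H_cons p (Step.H :: t)]
      exact h _ (by simpa using ht) (by simp) (by simpa using hproper)
  · intro h s hs hne hproper
    rcases prefix_append_cons_cases hs with hsp | ⟨t, ht, rfl⟩
    · refine h s (hsp.trans (prefix_append _ _)) hne ?_
      rintro rfl
      simpa using hsp.length_le
    · rcases prefix_cons_iff.1 ht with rfl | ⟨t, rfl, ht⟩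
      · rw [hgt_append_H_cons, append_nil]
        exact h p (prefix_append _ _) hp (by simp)
      · rw [hgt_append_H_cons]
        exact h _ (by simpa using ht) (by simp) (by simpa using hproper)

theorem isBargraph_append_H_H_cons_iff (hp : p ≠ []) :
    IsBargraph (p ++ Step.H :: Step.H :: q) ↔ IsBargraph (p ++ Step.H :: q) := by
  have := length_pos_of_ne_nil hp
  rw [isBargraph_iff, isBargraph_iff, hgt_append_H_cons,
    properPrefixesPos_append_H_H_cons_iff hp, cornerless_append_H_H_cons_iff]
  simp only [length_append, length_cons]
  constructor <;> exact fun ⟨_, rest⟩ => ⟨by omega, rest⟩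

end DuplicateH

theorem isBargraph_append_replicate_H_iff {p q : List Step} (hp : p ≠ []) (b : ℕ) :
    IsBargraph (p ++ replicate (b + 1) Step.H ++ q) ↔ IsBargraph (p ++ Step.H :: q) := by
  induction b with
  | zero => simp
  | succ b ih =>
    rw [← ih, append_assoc, append_assoc, replicate_succ, replicate_succ, cons_append,
      cons_append, isBargraph_append_H_H_cons_iff hp]

theorem leadH_replicate_append {q : List Step} (hq : q.head? ≠ some Step.H) (n : ℕ) :
    leadH (replicate n Step.H ++ q) = n := by
  induction n with
  | zero => rcases q with _ | ⟨_ | _ | _, _⟩ <;> simp_all [leadH]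
  | succ n ih => simp [replicate_succ, leadH, ih]

def padLeadH (h : ℕ) : List Step → List Step
  | [] => []
  | Step.H :: rest => replicate h Step.H ++ Step.H :: rest
  | s :: rest => s :: padLeadH h rest

section LeftmostSegment

variable {p q : List Step} {b : ℕ}

theorem lhsW_append_replicate_H (hp : Step.H ∉ p) (hb : 0 < b) (hq : q.head? ≠ some Step.H) :
    lhsW (p ++ replicate b Step.H ++ q) = b := by
  induction p with
  | nil =>
    obtain ⟨b, rfl⟩ := Nat.exists_eq_add_one_of_ne_zero hb.ne'
    simp [replicate_succ, lhsW, leadH_replicate_append hq]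
  | cons x p ih => rcases x with _ | _ | _ <;> simp_all [lhsW]

theorem stripLeadH_append_replicate_H (h : ℕ) (hp : Step.H ∉ p) (hb : 0 < b) (hh : h ≤ b) :
    stripLeadH h (p ++ replicate b Step.H ++ q) = p ++ replicate (b - h) Step.H ++ q := by
  induction p with
  | nil =>
    obtain ⟨b, rfl⟩ := Nat.exists_eq_add_one_of_ne_zero hb.ne'
    rw [nil_append, nil_append, replicate_succ, cons_append, stripLeadH, ← cons_append,
      ← replicate_succ, drop_append_of_le_length (by simpa using hh), drop_replicate]
  | cons x p ih => rcases x with _ | _ | _ <;> simp_all [stripLeadH]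

theorem padLeadH_append_replicate_H (h : ℕ) (hp : Step.H ∉ p) (hb : 0 < b) :
    padLeadH h (p ++ replicate b Step.H ++ q) = p ++ replicate (h + b) Step.H ++ q := by
  induction p with
  | nil =>
    obtain ⟨b, rfl⟩ := Nat.exists_eq_add_one_of_ne_zero hb.ne'
    simp [replicate_succ, padLeadH, ← replicate_append_replicate]
  | cons x p ih => rcases x with _ | _ | _ <;> simp_all [padLeadH]

end LeftmostSegment

theorem IsBargraph.exists_eq_replicate_U_append_replicate_H {w : List Step}
    (hw : IsBargraph w) : ∃ a b q, 0 < a ∧ 0 < b ∧ q.head? ≠ some Step.H ∧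
      w = replicate a Step.U ++ replicate b Step.H ++ q := by
  obtain ⟨hlen, h0, hpos, hcor⟩ := hw
  obtain ⟨a, t, rfl, ht⟩ := exists_eq_replicate_append Step.U w
  obtain ⟨y, t, rfl⟩ : ∃ y t', t = y :: t' := by
    rcases t with _ | ⟨y, t⟩
    · simp [hgt, Step.val] at h0
      simp [h0] at hlen
    · exact ⟨y, t, rfl⟩
  have ha : 0 < a := by
    refine Nat.pos_of_ne_zero fun ha => ?_
    subst ha
    have hy := hpos [y] (by simp) (by simp) (by rintro ⟨⟩; simp at hlen)
    cases y <;> simp_all [hgt, Step.val]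
  have hy : y = Step.H := by
    rcases y with _ | _ | _
    · simp at ht
    · rfl
    · refine absurd ⟨replicate (a - 1) Step.U, t, ?_⟩ hcor.1
      obtain ⟨a, rfl⟩ := Nat.exists_eq_add_one_of_ne_zero ha.ne'
      simp [replicate_succ']
  obtain ⟨b, q, rfl, hq⟩ := exists_eq_replicate_append Step.H t
  exact ⟨a, b + 1, q, ha, b.succ_pos, hq, by simp [hy, replicate_succ]⟩

theorem semi_replicate_U_append_replicate_H (a b : ℕ) (q : List Step) :
    semi (replicate a Step.U ++ replicate b Step.H ++ q) = a + b + semi q := by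
  simp [semi, count_replicate]
  omega

theorem stripLeadH_padLeadH (h : ℕ) : ∀ w : List Step, stripLeadH h (padLeadH h w) = w
  | [] => rfl
  | Step.U :: w => by simp [padLeadH, stripLeadH, stripLeadH_padLeadH h w]
  | Step.D :: w => by simp [padLeadH, stripLeadH, stripLeadH_padLeadH h w]
  | Step.H :: w => by
    have := stripLeadH_append_replicate_H (p := []) (q := w) h (by simp) h.succ_pos h.le_succ
    simpa [padLeadH, replicate_succ'] using this

section Bargraph

variable {w : List Step} {h : ℕ}

theorem IsBargraph.exists_eq_stripLeadH (hw : IsBargraph w) (hh : h < lhsW w) :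
    ∃ a c q, 0 < a ∧ w = replicate a Step.U ++ replicate (h + c + 1) Step.H ++ q ∧
      stripLeadH h w = replicate a Step.U ++ replicate (c + 1) Step.H ++ q := by
  obtain ⟨a, b, q, ha, hb, hq, rfl⟩ := hw.exists_eq_replicate_U_append_replicate_H
  rw [lhsW_append_replicate_H (by simp) hb hq] at hh
  obtain ⟨c, rfl⟩ : ∃ c, b = h + c + 1 := ⟨b - h - 1, by omega⟩
  refine ⟨a, c, q, ha, rfl, ?_⟩
  rw [stripLeadH_append_replicate_H h (by simp) hb hh.le]
  congr 3
  omega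

theorem isBargraph_stripLeadH (hw : IsBargraph w) (hh : h < lhsW w) :
    IsBargraph (stripLeadH h w) := by
  obtain ⟨a, c, q, ha, rfl, hs⟩ := hw.exists_eq_stripLeadH hh
  have hU : replicate a Step.U ≠ [] := ne_nil_of_length_pos (by simpa)
  rwa [hs, isBargraph_append_replicate_H_iff hU, ← isBargraph_append_replicate_H_iff hU (h + c)]

theorem semi_stripLeadH (hw : IsBargraph w) (hh : h < lhsW w) :
    semi (stripLeadH h w) + h = semi w := by
  obtain ⟨a, c, q, ha, rfl, hs⟩ := hw.exists_eq_stripLeadH hh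
  simp only [hs, semi_replicate_U_append_replicate_H]
  omega

theorem padLeadH_stripLeadH (hw : IsBargraph w) (hh : h < lhsW w) :
    padLeadH h (stripLeadH h w) = w := by
  obtain ⟨a, c, q, ha, rfl, hs⟩ := hw.exists_eq_stripLeadH hh
  rw [hs, padLeadH_append_replicate_H h (by simp) (by omega), ← add_assoc]

theorem isBargraph_padLeadH (hw : IsBargraph w) : IsBargraph (padLeadH h w) := by
  obtain ⟨a, b, q, ha, hb, hq, rfl⟩ := hw.exists_eq_replicate_U_append_replicate_H
  obtain ⟨c, rfl⟩ : ∃ c, b = c + 1 := ⟨b - 1, by omega⟩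
  have hU : replicate a Step.U ≠ [] := ne_nil_of_length_pos (by simpa)
  rwa [padLeadH_append_replicate_H h (by simp) hb, ← add_assoc,
    isBargraph_append_replicate_H_iff hU, ← isBargraph_append_replicate_H_iff hU c]

theorem IsBargraph.semi_pos (hw : IsBargraph w) : 0 < semi w := by
  obtain ⟨a, b, q, ha, hb, hq, rfl⟩ := hw.exists_eq_replicate_U_append_replicate_H
  rw [semi_replicate_U_append_replicate_H]
  omega

theorem semi_padLeadH (hw : IsBargraph w) : semi (padLeadH h w) = semi w + h := by
  obtain ⟨a, b, q, ha, hb, hq, rfl⟩ := hw.exists_eq_replicate_U_append_replicate_H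
  rw [padLeadH_append_replicate_H h (by simp) hb, semi_replicate_U_append_replicate_H,
    semi_replicate_U_append_replicate_H]
  omega

theorem lt_lhsW_padLeadH (hw : IsBargraph w) : h < lhsW (padLeadH h w) := by
  obtain ⟨a, b, q, ha, hb, hq, rfl⟩ := hw.exists_eq_replicate_U_append_replicate_H
  rw [padLeadH_append_replicate_H h (by simp) hb, lhsW_append_replicate_H (by simp) (by omega) hq]
  omega

end Bargraph

/-- bargraphs of semiperimeter `n` whose leftmost horizontal segment has
width `> h` are in bijection with bargraphs of semiperimeter `n - h`, by deleting `h`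
of the `H` steps from the leftmost horizontal segment. -/
theorem lhs_bijection :
    ∀ n h : ℕ, 2 ≤ n →
      ∃ e : {w : List Step // IsBargraph w ∧ semi w = n ∧ h < lhsW w} ≃
            {w : List Step // IsBargraph w ∧ semi w = n - h},
        ∀ w, (e w).1 = stripLeadH h w.1 := by
  intro n h _
  refine ⟨
    { toFun := fun w => ⟨stripLeadH h w.1, isBargraph_stripLeadH w.2.1 w.2.2.2, by
        have := semi_stripLeadH w.2.1 w.2.2.2
        have := w.2.2.1
        omega⟩
      invFun := fun v => ⟨padLeadH h v.1, isBargraph_padLeadH v.2.1, by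
        have := semi_padLeadH (h := h) v.2.1
        have := v.2.2
        have := v.2.1.semi_pos
        omega, lt_lhsW_padLeadH v.2.1⟩
      left_inv := fun w => Subtype.ext (padLeadH_stripLeadH w.2.1 w.2.2.2)
      right_inv := fun v => Subtype.ext (stripLeadH_padLeadH h v.1) },
    fun _ => rfl⟩
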